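/- Let F be a field of characteristic 0 and let B be an n×n symmetric matrix over F with qpr(B) = q_1 q_2 ⋯ q_{n−1} A, where q_k ∈ {A, S} for k = 1, …, n−1. Then there exists an (n+1)×(n+1) symmetric matrix B' over F such that qpr(B') = q_1 q_2 ⋯ q_{n−1} S A. -/

import Mathlib

open Matrix

/-- The minor of a square matrix `B` lying in the rows indexed by `α` and the columns
indexed by `β` (each listed in increasing order); junk value `0` if `α.card ≠ β.card`. -/
def qMinor {R : Type*} [CommRing R] {m : Type*} [Fintype m] [LinearOrder m]
    (B : Matrix m m R) (α β : Finset m) : R :=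
  if h : β.card = α.card then
    (Matrix.of fun i j : Fin α.card =>
      B (α.orderEmbOfFin rfl i) (β.orderEmbOfFin h j)).det
  else 0

/-- `α` and `β` index a quasi-principal submatrix of order `k`, i.e.
`|α| = |β| = k` and `k - 1 ≤ |α ∩ β| (≤ k)`. -/
def IsQPPair {m : Type*} [DecidableEq m] (k : ℕ) (α β : Finset m) : Prop :=
  α.card = k ∧ β.card = k ∧ k - 1 ≤ (α ∩ β).card

/-- All quasi-principal minors of `B` of order `k` are nonzero. -/
def QPAllNonzero {R : Type*} [CommRing R] {m : Type*} [Fintype m] [LinearOrder m]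
    (B : Matrix m m R) (k : ℕ) : Prop :=
  ∀ α β : Finset m, IsQPPair k α β → qMinor B α β ≠ 0

/-- All quasi-principal minors of `B` of order `k` are zero. -/
def QPAllZero {R : Type*} [CommRing R] {m : Type*} [Fintype m] [LinearOrder m]
    (B : Matrix m m R) (k : ℕ) : Prop :=
  ∀ α β : Finset m, IsQPPair k α β → qMinor B α β = 0

/-- The three possible letters of a qpr-sequence. -/
inductive QPR : Type
  | A
  | S
  | N
deriving DecidableEq

open Classical in
/-- The letter of the qpr-sequence of `B` corresponding to order `k`:
`A` if all quasi-principal minors of order `k` are nonzero, `N` if all are zero,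
and `S` otherwise. -/
noncomputable def qprEntry {R : Type*} [CommRing R] {m : Type*} [Fintype m] [LinearOrder m]
    (B : Matrix m m R) (k : ℕ) : QPR :=
  if QPAllNonzero B k then QPR.A
  else if QPAllZero B k then QPR.N
  else QPR.S

/-- A sequence of letters `q 0, …, q (n-1)` (standing for `q_1 ⋯ q_n`) is attainable
over `F` if it is the qpr-sequence of an `n × n` symmetric matrix over `F`. -/
def Attainable (F : Type*) [Field F] {n : ℕ} (q : Fin n → QPR) : Prop :=
  ∃ B : Matrix (Fin n) (Fin n) F, B.IsSymm ∧ ∀ k : Fin n, qprEntry B ((k : ℕ) + 1) = q k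

/-- The Schur complement `B/B[γ] = B[γᶜ] - B[γᶜ, γ] B[γ]⁻¹ B[γ, γᶜ]`,
with rows and columns indexed by `γᶜ` (indexing inherited from `B`). -/
noncomputable def schurCompl {R : Type*} [CommRing R] {n : ℕ}
    (B : Matrix (Fin n) (Fin n) R) (γ : Finset (Fin n)) :
    Matrix ↥(γᶜ) ↥(γᶜ) R :=
  B.submatrix (fun i : ↥(γᶜ) => (i : Fin n)) (fun j : ↥(γᶜ) => (j : Fin n)) -
    B.submatrix (fun i : ↥(γᶜ) => (i : Fin n)) (fun j : ↥γ => (j : Fin n)) *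
      (B.submatrix (fun i : ↥γ => (i : Fin n)) fun j : ↥γ => (j : Fin n))⁻¹ *
      B.submatrix (fun i : ↥γ => (i : Fin n)) fun j : ↥(γᶜ) => (j : Fin n)

/-- The `(m+1) × (m+1)` matrix with block form `[[A, x], [yᵀ, b]]`. -/
def borderMat {R : Type*} [CommRing R] {m : ℕ} (A : Matrix (Fin m) (Fin m) R)
    (x y : Fin m → R) (b : R) : Matrix (Fin (m + 1)) (Fin (m + 1)) R :=
  Matrix.of fun i j =>
    if hi : (i : ℕ) < m then
      if hj : (j : ℕ) < m then A ⟨i, hi⟩ ⟨j, hj⟩ else x ⟨i, hi⟩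
    else
      if hj : (j : ℕ) < m then y ⟨j, hj⟩ else b

/-!
Take `B' = [[B, B v], [vᵀ B, b]]` with `vₙ = 0`. Its new column `B v` is a combination of
the first `n - 1` columns of `B`, so the almost-principal minor on rows `1, …, n` and columns
`1, …, n - 1, n + 1` vanishes while the principal minor `det B` does not: `q'ₙ = S`. Minors
of `B'` avoiding the new index are minors of `B`, so every `S` among `q₁, …, qₙ₋₁` survives.

Every other quasi-principal minor that has to be nonzero (order `k ≤ n - 1` with `q_k = A`,
or `det B'`) is a polynomial in `(v, b)`, and some specialisation turns it into a nonzero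
minor of `B`: `v = 0, b = 1` gives `det B' = det B`; `v = eᵢ, b = bᵢᵢ` makes `B'` the matrix
`B` with the index `i` repeated; `v = eₚ + e_q, b = vᵀ B v` turns it, after two
transvections, into the minor of `B` with `p` as the new row index and `q` as the new column
index. Over an infinite field finitely many nonzero polynomials have a common non-root.
-/

open Finset

lemma exists_perm_eq_orderEmbOfFin {ι : Type*} [LinearOrder ι] {k : ℕ} {r : Fin k → ι}
    (hr : Function.Injective r) (h : #(univ.image r) = k) :
    ∃ σ : Equiv.Perm (Fin k), ∀ i, r i = (univ.image r).orderEmbOfFin h (σ i) := by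
  let e : Fin k ≃ univ.image r :=
    Equiv.ofBijective (fun i => ⟨r i, mem_image_of_mem r (mem_univ i)⟩)
      ⟨fun i j hij => hr (congrArg Subtype.val hij), fun ⟨x, hx⟩ => by
        obtain ⟨i, -, rfl⟩ := mem_image.1 hx
        exact ⟨i, rfl⟩⟩
  refine ⟨e.trans ((univ.image r).orderIsoOfFin h).toEquiv.symm, fun i => ?_⟩
  simp [← coe_orderIsoOfFin_apply, e]
  rfl

section QMinor

variable {R : Type*} [CommRing R] {ι : Type*} [Fintype ι] [LinearOrder ι]

lemma qMinor_eq_det_submatrix (B : Matrix ι ι R) {α β : Finset ι} {k : ℕ}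
    (hα : #α = k) (hβ : #β = k) :
    qMinor B α β = (B.submatrix (α.orderEmbOfFin hα) (β.orderEmbOfFin hβ)).det := by
  subst hα
  rw [qMinor, dif_pos hβ]
  rfl

lemma qMinor_map {S : Type*} [CommRing S] (f : R →+* S) (B : Matrix ι ι R) (α β : Finset ι) :
    qMinor (B.map f) α β = f (qMinor B α β) := by
  unfold qMinor
  split_ifs
  · exact (RingHom.map_det f _).symm
  · exact (map_zero f).symm

lemma qMinor_symm {B : Matrix ι ι R} (hB : B.IsSymm) (α β : Finset ι) :
    qMinor B α β = qMinor B β α := by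
  by_cases h : #β = #α
  · rw [qMinor_eq_det_submatrix B rfl h, qMinor_eq_det_submatrix B h rfl, ← det_transpose,
      transpose_submatrix, hB.eq]
  · rw [qMinor, dif_neg h, qMinor, dif_neg (Ne.symm h)]

lemma qMinor_image_ne_zero_iff (B : Matrix ι ι R) {k : ℕ} {r c : Fin k → ι}
    (hr : Function.Injective r) (hc : Function.Injective c) :
    qMinor B (univ.image r) (univ.image c) ≠ 0 ↔ (B.submatrix r c).det ≠ 0 := by
  have hcr : #(univ.image r) = k := by simp [card_image_of_injective _ hr]
  have hcc : #(univ.image c) = k := by simp [card_image_of_injective _ hc]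
  obtain ⟨σ, hσ⟩ := exists_perm_eq_orderEmbOfFin hr hcr
  obtain ⟨τ, hτ⟩ := exists_perm_eq_orderEmbOfFin hc hcc
  have hsub : B.submatrix r c =
      ((B.submatrix ((univ.image r).orderEmbOfFin hcr) ((univ.image c).orderEmbOfFin hcc)).submatrix
        σ id).submatrix id τ := by
    ext i j
    simp [hσ i, hτ j]
  rw [hsub, det_permute', det_permute, ← qMinor_eq_det_submatrix]
  rcases Int.units_eq_one_or (Equiv.Perm.sign σ) with h1 | h1 <;>
    rcases Int.units_eq_one_or (Equiv.Perm.sign τ) with h2 | h2 <;> simp [h1, h2]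

end QMinor

section Relabel

variable {R : Type*} [CommRing R] {ι κ : Type*} [Fintype ι] [LinearOrder ι] [Fintype κ]
  [LinearOrder κ] (B : Matrix ι ι R)

lemma qMinor_submatrix_orderEmbedding (f : κ ↪o ι) (α β : Finset κ) :
    qMinor (B.submatrix f f) α β = qMinor B (α.image f) (β.image f) := by
  have hf : ∀ s : Finset κ, #(s.image f) = #s := fun s => card_image_of_injective _ f.injective
  have horder : ∀ (s : Finset κ) {k : ℕ} (hs : #s = k) (ht : #(s.image f) = k),
      ⇑((s.image f).orderEmbOfFin ht) = f ∘ s.orderEmbOfFin hs := fun s k hs ht =>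
    (orderEmbOfFin_unique ht (fun i => mem_image_of_mem f (orderEmbOfFin_mem s hs i))
      (f.strictMono.comp (s.orderEmbOfFin hs).strictMono)).symm
  by_cases h : #β = #α
  · rw [qMinor_eq_det_submatrix _ rfl h, qMinor_eq_det_submatrix _ (hf α) (by rw [hf, h]),
      horder α rfl, horder β h]
    rfl
  · rw [qMinor, dif_neg h, qMinor, dif_neg (by rwa [hf, hf])]

lemma qMinor_submatrix_ne_zero_iff (f : κ → ι) {α β : Finset κ} (hα : Set.InjOn f α)
    (hβ : Set.InjOn f β) (hαβ : #α = #β) :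
    qMinor (B.submatrix f f) α β ≠ 0 ↔ qMinor B (α.image f) (β.image f) ≠ 0 := by
  set r := α.orderEmbOfFin rfl
  set c := β.orderEmbOfFin hαβ.symm
  have hr : univ.image r = α := image_orderEmbOfFin_univ α rfl
  have hc : univ.image c = β := image_orderEmbOfFin_univ β hαβ.symm
  have hfr : Function.Injective (f ∘ r) := fun i j h =>
    r.injective (hα (orderEmbOfFin_mem α rfl i) (orderEmbOfFin_mem α rfl j) h)
  have hfc : Function.Injective (f ∘ c) := fun i j h =>
    c.injective (hβ (orderEmbOfFin_mem β _ i) (orderEmbOfFin_mem β _ j) h)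
  rw [← hr, ← hc, image_image, image_image, qMinor_image_ne_zero_iff _ r.injective c.injective,
    qMinor_image_ne_zero_iff _ hfr hfc, submatrix_submatrix]

end Relabel

section QprEntry

variable {R : Type*} [CommRing R] {ι : Type*} [Fintype ι] [LinearOrder ι]
  (B : Matrix ι ι R) (k : ℕ)

lemma qprEntry_eq_A_iff : qprEntry B k = QPR.A ↔ QPAllNonzero B k := by
  unfold qprEntry
  split_ifs <;> simp_all

lemma qprEntry_eq_S_iff : qprEntry B k = QPR.S ↔ ¬QPAllNonzero B k ∧ ¬QPAllZero B k := by
  unfold qprEntry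
  split_ifs <;> simp_all

end QprEntry

lemma qMinor_univ {R : Type*} [CommRing R] {n : ℕ} (B : Matrix (Fin n) (Fin n) R) :
    qMinor B univ univ = B.det := by
  have hid : ⇑((univ : Finset (Fin n)).orderEmbOfFin (card_fin n)) = id :=
    (orderEmbOfFin_unique _ (fun i => mem_univ i) strictMono_id).symm
  rw [qMinor_eq_det_submatrix B (card_fin n) (card_fin n), hid, submatrix_id_id]

lemma qprEntry_eq_A_iff_det_ne_zero {R : Type*} [CommRing R] {n : ℕ}
    (B : Matrix (Fin n) (Fin n) R) : qprEntry B n = QPR.A ↔ B.det ≠ 0 := by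
  rw [qprEntry_eq_A_iff, ← qMinor_univ]
  refine ⟨fun h => h univ univ ⟨card_fin n, card_fin n, by simp⟩, fun h α β hαβ => ?_⟩
  rwa [eq_univ_of_card α (by simp [hαβ.1]), eq_univ_of_card β (by simp [hαβ.2.1])]

lemma IsQPPair.symm {ι : Type*} [DecidableEq ι] {k : ℕ} {α β : Finset ι}
    (h : IsQPPair k α β) : IsQPPair k β α :=
  ⟨h.2.1, h.1, by rw [inter_comm]; exact h.2.2⟩

lemma image_univ_snoc {α : Type*} [DecidableEq α] {k : ℕ} (e : Fin k → α) (a : α) :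
    univ.image (Fin.snoc (α := fun _ => α) e a) = insert a (univ.image e) := by
  apply coe_injective
  simp

lemma exists_eq_image_castSucc {n : ℕ} {s : Finset (Fin (n + 1))} (h : Fin.last n ∉ s) :
    ∃ t : Finset (Fin n), s = t.image Fin.castSucc := by
  classical
  refine ⟨univ.filter (fun i => i.castSucc ∈ s), ?_⟩
  ext j
  induction j using Fin.lastCases <;> simp [h]

lemma exists_eq_insert_last_image_castSucc {n : ℕ} {s : Finset (Fin (n + 1))}
    (h : Fin.last n ∈ s) :
    ∃ t : Finset (Fin n), s = insert (Fin.last n) (t.image Fin.castSucc) := by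
  obtain ⟨t, ht⟩ := exists_eq_image_castSucc (notMem_erase (Fin.last n) s)
  exact ⟨t, by rw [← ht, insert_erase h]⟩

lemma insert_last_image_castSucc_eq_image_snoc {n k : ℕ} (s : Finset (Fin n)) (h : #s = k) :
    insert (Fin.last n) (s.image Fin.castSucc) =
      univ.image (Fin.snoc (α := fun _ => Fin (n + 1)) (Fin.castSucc ∘ s.orderEmbOfFin h)
        (Fin.last n)) := by
  rw [image_univ_snoc, ← image_image, image_orderEmbOfFin_univ]

section CastSuccSets

variable {n k : ℕ} {a c : Finset (Fin n)}

lemma last_notMem_image_castSucc (a : Finset (Fin n)) : Fin.last n ∉ a.image Fin.castSucc := by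
  simp [Fin.castSucc_ne_last]

lemma card_image_castSucc (a : Finset (Fin n)) : #(a.image Fin.castSucc) = #a :=
  card_image_of_injective _ (Fin.castSucc_injective n)

lemma image_castSucc_inter (a c : Finset (Fin n)) :
    a.image Fin.castSucc ∩ c.image Fin.castSucc = (a ∩ c).image Fin.castSucc :=
  (image_inter _ _ (Fin.castSucc_injective n)).symm

lemma isQPPair_image_castSucc_iff :
    IsQPPair k (a.image Fin.castSucc) (c.image Fin.castSucc) ↔ IsQPPair k a c := by
  simp only [IsQPPair, image_castSucc_inter, card_image_castSucc]

lemma isQPPair_insert_last_iff :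
    IsQPPair (k + 1) (insert (Fin.last n) (a.image Fin.castSucc))
      (insert (Fin.last n) (c.image Fin.castSucc)) ↔ IsQPPair k a c := by
  simp only [IsQPPair, ← insert_inter_distrib, image_castSucc_inter,
    card_insert_of_notMem (last_notMem_image_castSucc _), card_image_castSucc]
  omega

lemma IsQPPair.subset_of_insert_last
    (h : IsQPPair (k + 1) (insert (Fin.last n) (a.image Fin.castSucc)) (c.image Fin.castSucc)) :
    #a = k ∧ #c = k + 1 ∧ a ⊆ c := by
  obtain ⟨ha, hc, hac⟩ := h
  rw [insert_inter_of_notMem (last_notMem_image_castSucc c), image_castSucc_inter,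
    card_image_castSucc] at hac
  rw [card_insert_of_notMem (last_notMem_image_castSucc a), card_image_castSucc] at ha
  rw [card_image_castSucc] at hc
  refine ⟨by omega, hc, ?_⟩
  rw [← inter_eq_left]
  exact eq_of_subset_of_card_le inter_subset_left (by omega)

end CastSuccSets

section BorderMat

variable {R : Type*} [CommRing R] {m : ℕ} (A : Matrix (Fin m) (Fin m) R) (x y : Fin m → R)
  (b : R)

@[simp] lemma borderMat_castSucc_castSucc (i j : Fin m) :
    borderMat A x y b i.castSucc j.castSucc = A i j := by
  simp [borderMat]

@[simp] lemma borderMat_castSucc_last (i : Fin m) :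
    borderMat A x y b i.castSucc (Fin.last m) = x i := by
  simp [borderMat]

@[simp] lemma borderMat_last_castSucc (j : Fin m) :
    borderMat A x y b (Fin.last m) j.castSucc = y j := by
  simp [borderMat]

@[simp] lemma borderMat_last_last : borderMat A x y b (Fin.last m) (Fin.last m) = b := by
  simp [borderMat]

lemma borderMat_map {S : Type*} [CommRing S] (f : R →+* S) :
    (borderMat A x y b).map f = borderMat (A.map f) (f ∘ x) (f ∘ y) (f b) := by
  ext i j
  induction i using Fin.lastCases <;> induction j using Fin.lastCases <;> simp

lemma submatrix_castSucc_borderMat :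
    (borderMat A x y b).submatrix Fin.castSucc Fin.castSucc = A := by
  ext i j
  simp

lemma submatrix_snoc_borderMat {k : ℕ} (r c : Fin k → Fin m) :
    (borderMat A x y b).submatrix (Fin.snoc (Fin.castSucc ∘ r) (Fin.last m))
        (Fin.snoc (Fin.castSucc ∘ c) (Fin.last m)) =
      borderMat (A.submatrix r c) (x ∘ r) (y ∘ c) b := by
  ext i j
  induction i using Fin.lastCases <;> induction j using Fin.lastCases <;> simp

lemma det_borderMat_zero_left : (borderMat A 0 y b).det = b * A.det := by
  rw [det_succ_column _ (Fin.last m), Fin.sum_univ_castSucc]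
  simp only [borderMat_castSucc_last, Pi.zero_apply, mul_zero, zero_mul, Finset.sum_const_zero,
    zero_add, borderMat_last_last, Fin.succAbove_last, submatrix_castSucc_borderMat, Fin.val_last,
    (Even.add_self m).neg_one_pow, one_mul]

end BorderMat

lemma borderMat_isSymm {R : Type*} [CommRing R] {m : ℕ} {A : Matrix (Fin m) (Fin m) R}
    (hA : A.IsSymm) (x : Fin m → R) (b : R) : (borderMat A x x b).IsSymm := by
  ext i j
  induction i using Fin.lastCases <;> induction j using Fin.lastCases <;> simp [hA.apply]

section BorderMatQpr

variable {R : Type*} [CommRing R] {m : ℕ} (A : Matrix (Fin m) (Fin m) R) (x y : Fin m → R)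
  (b : R)

lemma qMinor_borderMat_image_castSucc (α β : Finset (Fin m)) :
    qMinor (borderMat A x y b) (α.image Fin.castSucc) (β.image Fin.castSucc) =
      qMinor A α β := by
  conv_rhs => rw [← submatrix_castSucc_borderMat A x y b]
  exact (qMinor_submatrix_orderEmbedding _ Fin.castSuccOrderEmb α β).symm

lemma qprEntry_borderMat_of_eq_S {k : ℕ} (h : qprEntry A k = QPR.S) :
    qprEntry (borderMat A x y b) k = QPR.S := by
  rw [qprEntry_eq_S_iff] at h ⊢
  obtain ⟨hNZ, hZ⟩ := h
  refine ⟨fun hNZ' => hNZ fun α β hαβ => ?_, fun hZ' => hZ fun α β hαβ => ?_⟩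
  · rw [← qMinor_borderMat_image_castSucc A x y b]
    exact hNZ' _ _ (isQPPair_image_castSucc_iff.2 hαβ)
  · rw [← qMinor_borderMat_image_castSucc A x y b]
    exact hZ' _ _ (isQPPair_image_castSucc_iff.2 hαβ)

end BorderMatQpr

def borderMulVec {R : Type*} [CommRing R] {m : ℕ} (B : Matrix (Fin m) (Fin m) R)
    (v : Fin m → R) (b : R) : Matrix (Fin (m + 1)) (Fin (m + 1)) R :=
  borderMat B (B *ᵥ v) (v ᵥ* B) b

lemma borderMulVec_isSymm {R : Type*} [CommRing R] {m : ℕ} {B : Matrix (Fin m) (Fin m) R}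
    (hB : B.IsSymm) (v : Fin m → R) (b : R) :
    (borderMulVec B v b).IsSymm := by
  rw [borderMulVec, ← vecMul_transpose, hB.eq]
  exact borderMat_isSymm hB _ _

section BorderMulVec

variable {R : Type*} [CommRing R] {m : ℕ} (B : Matrix (Fin m) (Fin m) R)

lemma borderMulVec_map {S : Type*} [CommRing S] (f : R →+* S) (v : Fin m → R) (b : R) :
    (borderMulVec B v b).map f = borderMulVec (B.map f) (f ∘ v) (f b) := by
  rw [borderMulVec, borderMat_map, borderMulVec]
  congr 1 <;> ext <;> simp [RingHom.map_mulVec, RingHom.map_vecMul]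

lemma borderMulVec_single (i : Fin m) :
    borderMulVec B (Pi.single i 1) (B i i) =
      B.submatrix (Fin.snoc (α := fun _ => Fin m) id i)
        (Fin.snoc (α := fun _ => Fin m) id i) := by
  ext j l
  induction j using Fin.lastCases <;> induction l using Fin.lastCases <;> simp [borderMulVec]

/-- Subtracting row `q` from the last row and column `p` from the last column (both present,
as `q ∈ a` and `p ∈ c`) leaves the minor of `B` on rows `a, p` and columns `c, q`. -/
lemma det_submatrix_borderMulVec_single_add_single {k : ℕ} (a c : Fin k → Fin m) {p q : Fin m}
    {s t : Fin k} (hs : a s = q) (ht : c t = p) :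
    ((borderMulVec B (Pi.single p 1 + Pi.single q 1) (B p p + B p q + B q p + B q q)).submatrix
        (Fin.snoc (Fin.castSucc ∘ a) (Fin.last m))
        (Fin.snoc (Fin.castSucc ∘ c) (Fin.last m))).det =
      (B.submatrix (Fin.snoc (α := fun _ => Fin m) a p)
        (Fin.snoc (α := fun _ => Fin m) c q)).det := by
  have hT : (borderMulVec B (Pi.single p 1 + Pi.single q 1)
        (B p p + B p q + B q p + B q q)).submatrix
        (Fin.snoc (Fin.castSucc ∘ a) (Fin.last m)) (Fin.snoc (Fin.castSucc ∘ c) (Fin.last m)) =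
      transvection (Fin.last k) s.castSucc 1 *
        B.submatrix (Fin.snoc (α := fun _ => Fin m) a p) (Fin.snoc (α := fun _ => Fin m) c q) *
        transvection t.castSucc (Fin.last k) 1 := by
    rw [borderMulVec, submatrix_snoc_borderMat]
    ext i j
    induction i using Fin.lastCases <;> induction j using Fin.lastCases <;>
      simp [mul_transvection_apply_of_ne, transvection_mul_apply_of_ne, Fin.castSucc_ne_last,
        mulVec_add, add_vecMul, hs, ht] <;> ring
  rw [hT, det_mul, det_mul, det_transvection_of_ne _ _ (Fin.castSucc_ne_last s).symm,
    det_transvection_of_ne _ _ (Fin.castSucc_ne_last t), one_mul, mul_one]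

end BorderMulVec

section BorderMulVecQpr

variable {R : Type*} [CommRing R] {m : ℕ} (B : Matrix (Fin (m + 1)) (Fin (m + 1)) R)

/-- When `v` does not involve the last coordinate, the new column `B v` is a combination of the
columns of `B` other than the last one. -/
lemma qMinor_borderMulVec_eq_zero {v : Fin (m + 1) → R} (hv : v (Fin.last m) = 0) (b : R) :
    qMinor (borderMulVec B v b) (univ.image Fin.castSucc)
      (insert (Fin.last (m + 1)) ((univ.image Fin.castSucc).image Fin.castSucc)) = 0 := by
  have hsub : (borderMulVec B v b).submatrix Fin.castSucc
      (Fin.snoc (Fin.castSucc ∘ Fin.castSucc) (Fin.last (m + 1))) =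
      B.updateCol (Fin.last m) (fun i => ∑ j, v j • B i j) := by
    ext i j
    induction j using Fin.lastCases <;>
      simp [borderMulVec, mulVec, dotProduct, mul_comm, updateCol_ne, Fin.castSucc_ne_last]
  have hcols : insert (Fin.last (m + 1)) ((univ.image Fin.castSucc).image Fin.castSucc) =
      univ.image (Fin.snoc (α := fun _ => Fin (m + 2)) (Fin.castSucc ∘ Fin.castSucc)
        (Fin.last (m + 1))) := by
    rw [image_univ_snoc, image_image]
  rw [hcols]
  by_contra h
  have h' := (qMinor_image_ne_zero_iff _ (Fin.castSucc_injective _)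
    (Fin.snoc_injective_of_injective ((Fin.castSucc_injective _).comp (Fin.castSucc_injective _))
      (by simp [Fin.castSucc_ne_last]))).1 h
  rw [hsub, det_updateCol_sum, hv, zero_smul] at h'
  exact h' rfl

lemma qprEntry_borderMulVec_eq_S {v : Fin (m + 1) → R} (hv : v (Fin.last m) = 0) (b : R)
    (hdet : B.det ≠ 0) : qprEntry (borderMulVec B v b) (m + 1) = QPR.S := by
  rw [qprEntry_eq_S_iff]
  constructor
  · refine fun hNZ => hNZ _ _ ⟨?_, ?_, ?_⟩ (qMinor_borderMulVec_eq_zero B hv b)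
    · rw [card_image_castSucc, card_fin]
    · rw [card_insert_of_notMem (last_notMem_image_castSucc _), card_image_castSucc,
        card_image_castSucc, card_fin]
    · calc m + 1 - 1 = #((univ.image Fin.castSucc).image (Fin.castSucc : Fin (m + 1) → _)) := by
            rw [card_image_castSucc, card_image_castSucc, card_fin, Nat.add_sub_cancel]
        _ ≤ _ := card_le_card (subset_inter (image_subset_image (subset_univ _))
            (subset_insert _ _))
  · refine fun hZ => hdet ?_
    rw [← qMinor_univ, ← qMinor_borderMat_image_castSucc B (B *ᵥ v) (v ᵥ* B) b]
    exact hZ _ _ (isQPPair_image_castSucc_iff.2 ⟨card_fin _, card_fin _, by simp⟩)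

end BorderMulVecQpr

section CollapseLast

variable {n : ℕ} (i : Fin n) (a : Finset (Fin n))

lemma image_snoc_id_image_castSucc :
    (a.image Fin.castSucc).image (Fin.snoc (α := fun _ => Fin n) id i) = a := by
  rw [image_image]
  convert image_id (s := a)
  ext j
  simp

lemma image_snoc_id_insert_last :
    (insert (Fin.last n) (a.image Fin.castSucc)).image (Fin.snoc (α := fun _ => Fin n) id i) =
      insert i a := by
  rw [image_insert, image_snoc_id_image_castSucc, Fin.snoc_last]

lemma injOn_snoc_id_image_castSucc :
    Set.InjOn (Fin.snoc (α := fun _ => Fin n) id i) (a.image Fin.castSucc : Set (Fin (n + 1))) :=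
  injOn_of_card_image_eq (by rw [image_snoc_id_image_castSucc, card_image_castSucc])

lemma injOn_snoc_id_insert_last {i : Fin n} {a : Finset (Fin n)} (hi : i ∉ a) :
    Set.InjOn (Fin.snoc (α := fun _ => Fin n) id i)
      ((insert (Fin.last n) (a.image Fin.castSucc) : Finset (Fin (n + 1))) : Set (Fin (n + 1))) :=
  injOn_of_card_image_eq (by
    rw [image_snoc_id_insert_last, card_insert_of_notMem hi,
      card_insert_of_notMem (last_notMem_image_castSucc a), card_image_castSucc])

end CollapseLast

section Witnesses

variable {R : Type*} [CommRing R] {m : ℕ} {B : Matrix (Fin (m + 1)) (Fin (m + 1)) R}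
  {a c : Finset (Fin (m + 1))}

lemma qMinor_borderMulVec_single_row_ne_zero {i : Fin (m + 1)} (hia : i ∉ a)
    (hac : #a + 1 = #c) (h : qMinor B (insert i a) c ≠ 0) :
    qMinor (borderMulVec B (Pi.single i 1) (B i i))
      (insert (Fin.last (m + 1)) (a.image Fin.castSucc)) (c.image Fin.castSucc) ≠ 0 := by
  rwa [borderMulVec_single, qMinor_submatrix_ne_zero_iff _ _ (injOn_snoc_id_insert_last hia)
    (injOn_snoc_id_image_castSucc i c), image_snoc_id_insert_last, image_snoc_id_image_castSucc]
  rw [card_insert_of_notMem (last_notMem_image_castSucc a), card_image_castSucc,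
    card_image_castSucc, hac]

lemma qMinor_borderMulVec_single_ne_zero {i : Fin (m + 1)} (hia : i ∉ a) (hic : i ∉ c)
    (hac : #a = #c) (h : qMinor B (insert i a) (insert i c) ≠ 0) :
    qMinor (borderMulVec B (Pi.single i 1) (B i i))
      (insert (Fin.last (m + 1)) (a.image Fin.castSucc))
      (insert (Fin.last (m + 1)) (c.image Fin.castSucc)) ≠ 0 := by
  rwa [borderMulVec_single, qMinor_submatrix_ne_zero_iff _ _ (injOn_snoc_id_insert_last hia)
    (injOn_snoc_id_insert_last hic), image_snoc_id_insert_last, image_snoc_id_insert_last]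
  simp only [card_insert_of_notMem (last_notMem_image_castSucc _), card_image_castSucc, hac]

lemma qMinor_borderMulVec_single_add_single_ne_zero {p q : Fin (m + 1)} (hpc : p ∈ c)
    (hpa : p ∉ a) (hqa : q ∈ a) (hqc : q ∉ c) (hac : #a = #c)
    (h : qMinor B (insert p a) (insert q c) ≠ 0) :
    qMinor (borderMulVec B (Pi.single p 1 + Pi.single q 1) (B p p + B p q + B q p + B q q))
      (insert (Fin.last (m + 1)) (a.image Fin.castSucc))
      (insert (Fin.last (m + 1)) (c.image Fin.castSucc)) ≠ 0 := by
  set ea := a.orderEmbOfFin rfl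
  set ec := c.orderEmbOfFin hac.symm
  obtain ⟨s, hs⟩ : q ∈ Set.range ea := by rwa [range_orderEmbOfFin]
  obtain ⟨t, ht⟩ : p ∈ Set.range ec := by rwa [range_orderEmbOfFin]
  rw [insert_last_image_castSucc_eq_image_snoc a rfl,
    insert_last_image_castSucc_eq_image_snoc c hac.symm,
    qMinor_image_ne_zero_iff _
      (Fin.snoc_injective_of_injective ((Fin.castSucc_injective _).comp ea.injective) (by simp))
      (Fin.snoc_injective_of_injective ((Fin.castSucc_injective _).comp ec.injective) (by simp)),
    det_submatrix_borderMulVec_single_add_single B ea ec hs ht,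
    ← qMinor_image_ne_zero_iff _
      (Fin.snoc_injective_of_injective ea.injective (by rwa [range_orderEmbOfFin]))
      (Fin.snoc_injective_of_injective ec.injective (by rwa [range_orderEmbOfFin])),
    image_univ_snoc, image_univ_snoc, image_orderEmbOfFin_univ, image_orderEmbOfFin_univ]
  exact h

end Witnesses

/-- `#(a ∪ c) ≤ k + 1 ≤ m`, so covering all indices but `last` forces `last ∉ a ∪ c` and
`#(a ∪ c) = m > k`. -/
lemma IsQPPair.exists_swap_of_cover {m k : ℕ} {a c : Finset (Fin (m + 1))} (h : IsQPPair k a c)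
    (hk : k + 1 ≤ m) (hcover : ∀ i, i ∉ a → i ∉ c → i = Fin.last m) :
    ∃ p ∈ c, p ∉ a ∧ p ≠ Fin.last m ∧ ∃ q ∈ a, q ∉ c ∧ q ≠ Fin.last m := by
  obtain ⟨ha, hc, hac⟩ := h
  have hunion : #(a ∪ c) + #(a ∩ c) = k + k := by rw [card_union_add_card_inter, ha, hc]
  have hinter : #(a ∩ c) ≤ k := ha ▸ card_le_card inter_subset_left
  have hsub : univ ⊆ insert (Fin.last m) (a ∪ c) := fun i _ => by
    by_cases hia : i ∈ a
    · exact mem_insert_of_mem (mem_union_left c hia)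
    by_cases hic : i ∈ c
    · exact mem_insert_of_mem (mem_union_right a hic)
    exact mem_insert.2 (Or.inl (hcover i hia hic))
  have hlast : Fin.last m ∉ a ∪ c := fun h => by
    have := card_le_card hsub
    rw [insert_eq_of_mem h, card_univ, Fintype.card_fin] at this
    omega
  have hcard := card_le_card hsub
  rw [card_univ, Fintype.card_fin, card_insert_of_notMem hlast] at hcard
  obtain ⟨p, hpc, hpa⟩ : ∃ p ∈ c, p ∉ a := not_subset.1 fun hca => by
    rw [union_eq_left.2 hca] at hcard
    omega
  obtain ⟨q, hqa, hqc⟩ : ∃ q ∈ a, q ∉ c := not_subset.1 fun hac' => by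
    rw [union_eq_right.2 hac'] at hcard
    omega
  exact ⟨p, hpc, hpa, fun h => hlast (h ▸ mem_union_right a hpc),
    q, hqa, hqc, fun h => hlast (h ▸ mem_union_left c hqa)⟩

section ExistsWitness

variable {R : Type*} [CommRing R] {m k : ℕ} {B : Matrix (Fin (m + 1)) (Fin (m + 1)) R}
  {a c : Finset (Fin (m + 1))}

lemma exists_borderMulVec_qMinor_ne_zero_row (hk : k + 1 ≤ m) (hNZ : QPAllNonzero B (k + 1))
    (ha : #a = k) (hc : #c = k + 1) (hac : a ⊆ c) :
    ∃ v b, v (Fin.last m) = 0 ∧ qMinor (borderMulVec B v b)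
      (insert (Fin.last (m + 1)) (a.image Fin.castSucc)) (c.image Fin.castSucc) ≠ 0 := by
  obtain ⟨i, -, hi⟩ := exists_mem_notMem_of_card_lt_card
    (s := insert (Fin.last m) a) (t := univ) (by
      rw [card_univ, Fintype.card_fin]; have := card_insert_le (Fin.last m) a; omega)
  rw [mem_insert, not_or] at hi
  refine ⟨Pi.single i 1, B i i, Pi.single_eq_of_ne' hi.1 1,
    qMinor_borderMulVec_single_row_ne_zero hi.2 (by omega) (hNZ _ _ ⟨?_, hc, ?_⟩)⟩
  · rw [card_insert_of_notMem hi.2, ha]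
  · have := card_le_card (subset_inter (subset_insert i a) hac)
    omega

lemma exists_borderMulVec_qMinor_ne_zero_insert_last (hk : k + 1 ≤ m)
    (hNZ : QPAllNonzero B (k + 1)) (h : IsQPPair k a c) :
    ∃ v b, v (Fin.last m) = 0 ∧ qMinor (borderMulVec B v b)
      (insert (Fin.last (m + 1)) (a.image Fin.castSucc))
      (insert (Fin.last (m + 1)) (c.image Fin.castSucc)) ≠ 0 := by
  obtain ⟨ha, hc, hac⟩ := h
  by_cases hi : ∃ i, i ∉ a ∧ i ∉ c ∧ i ≠ Fin.last m
  · obtain ⟨i, hia, hic, hi⟩ := hi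
    refine ⟨Pi.single i 1, B i i, Pi.single_eq_of_ne' hi 1,
      qMinor_borderMulVec_single_ne_zero hia hic (ha.trans hc.symm) (hNZ _ _ ⟨?_, ?_, ?_⟩)⟩
    · rw [card_insert_of_notMem hia, ha]
    · rw [card_insert_of_notMem hic, hc]
    · rw [← insert_inter_distrib, card_insert_of_notMem (fun h => hia (mem_inter.1 h).1)]
      omega
  push Not at hi
  obtain ⟨p, hpc, hpa, hp, q, hqa, hqc, hq⟩ := IsQPPair.exists_swap_of_cover ⟨ha, hc, hac⟩ hk hi
  refine ⟨Pi.single p 1 + Pi.single q 1, _,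
    by simp [Pi.single_eq_of_ne' hp, Pi.single_eq_of_ne' hq],
    qMinor_borderMulVec_single_add_single_ne_zero hpc hpa hqa hqc (ha.trans hc.symm)
      (hNZ _ _ ⟨?_, ?_, ?_⟩)⟩
  · rw [card_insert_of_notMem hpa, ha]
  · rw [card_insert_of_notMem hqc, hc]
  · have hsub : insert p (insert q (a ∩ c)) ⊆ insert p a ∩ insert q c := by
      intro x hx
      simp only [mem_insert, mem_inter] at hx ⊢
      rcases hx with rfl | rfl | ⟨hxa, hxc⟩ <;> tauto
    have := card_le_card hsub
    rw [card_insert_of_notMem (by simp [hpa, (ne_of_mem_of_not_mem hqa hpa).symm]),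
      card_insert_of_notMem (by simp [hqc])] at this
    omega

lemma exists_borderMulVec_qMinor_ne_zero (hB : B.IsSymm) (hk : k ≤ m) (hNZ : QPAllNonzero B k)
    {α β : Finset (Fin (m + 2))} (h : IsQPPair k α β) :
    ∃ v b, v (Fin.last m) = 0 ∧ qMinor (borderMulVec B v b) α β ≠ 0 := by
  by_cases hα : Fin.last (m + 1) ∈ α <;> by_cases hβ : Fin.last (m + 1) ∈ β
  · obtain ⟨a, rfl⟩ := exists_eq_insert_last_image_castSucc hα
    obtain ⟨c, rfl⟩ := exists_eq_insert_last_image_castSucc hβ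
    obtain ⟨k, rfl⟩ : ∃ k', k = k' + 1 := ⟨k - 1, by have := h.1; simp at this; omega⟩
    exact exists_borderMulVec_qMinor_ne_zero_insert_last hk hNZ (isQPPair_insert_last_iff.1 h)
  · obtain ⟨a, rfl⟩ := exists_eq_insert_last_image_castSucc hα
    obtain ⟨c, rfl⟩ := exists_eq_image_castSucc hβ
    obtain ⟨k, rfl⟩ : ∃ k', k = k' + 1 := ⟨k - 1, by have := h.1; simp at this; omega⟩
    obtain ⟨ha, hc, hac⟩ := h.subset_of_insert_last
    exact exists_borderMulVec_qMinor_ne_zero_row hk hNZ ha hc hac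
  · obtain ⟨a, rfl⟩ := exists_eq_image_castSucc hα
    obtain ⟨c, rfl⟩ := exists_eq_insert_last_image_castSucc hβ
    obtain ⟨k, rfl⟩ : ∃ k', k = k' + 1 := ⟨k - 1, by have := h.2.1; simp at this; omega⟩
    obtain ⟨hc, ha, hca⟩ := h.symm.subset_of_insert_last
    obtain ⟨v, b, hv, hne⟩ := exists_borderMulVec_qMinor_ne_zero_row hk hNZ hc ha hca
    exact ⟨v, b, hv, by rwa [qMinor_symm (borderMulVec_isSymm hB v b)]⟩
  · obtain ⟨a, rfl⟩ := exists_eq_image_castSucc hα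
    obtain ⟨c, rfl⟩ := exists_eq_image_castSucc hβ
    exact ⟨0, 0, rfl, by
      rw [borderMulVec, qMinor_borderMat_image_castSucc]
      exact hNZ a c (isQPPair_image_castSucc_iff.1 h)⟩

end ExistsWitness

lemma MvPolynomial.exists_forall_eval_ne_zero {R σ ι : Type*} [CommRing R] [IsDomain R]
    [Infinite R] (s : Finset ι) (p : ι → MvPolynomial σ R) (hp : ∀ i ∈ s, p i ≠ 0) :
    ∃ w : σ → R, ∀ i ∈ s, MvPolynomial.eval w (p i) ≠ 0 := by
  obtain ⟨w, hw⟩ : ∃ w, MvPolynomial.eval w (∏ i ∈ s, p i) ≠ 0 := by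
    by_contra! h
    exact prod_ne_zero_iff.2 hp (MvPolynomial.funext fun w => by simpa using h w)
  rw [map_prod] at hw
  exact ⟨w, prod_ne_zero_iff.1 hw⟩

open MvPolynomial in
lemma exists_borderMulVec_forall_qMinor_ne_zero {F : Type*} [Field F] [Infinite F] {m : ℕ}
    (B : Matrix (Fin (m + 1)) (Fin (m + 1)) F)
    (P : Finset (Fin (m + 2)) → Finset (Fin (m + 2)) → Prop)
    (hP : ∀ α β, P α β → ∃ v b, v (Fin.last m) = 0 ∧ qMinor (borderMulVec B v b) α β ≠ 0) :
    ∃ v b, v (Fin.last m) = 0 ∧ ∀ α β, P α β → qMinor (borderMulVec B v b) α β ≠ 0 := by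
  classical
  let V : Fin (m + 1) → MvPolynomial (Option (Fin (m + 1))) F :=
    fun i => if i = Fin.last m then 0 else X (some i)
  let restrict (w : Option (Fin (m + 1)) → F) : Fin (m + 1) → F :=
    fun i => if i = Fin.last m then 0 else w (some i)
  set G := borderMulVec (B.map C) V (X none)
  have heval : ∀ w α β,
      eval w (qMinor G α β) = qMinor (borderMulVec B (restrict w) (w none)) α β := by
    intro w α β
    rw [← qMinor_map, borderMulVec_map]
    congr 2
    · ext; simp
    · ext i; by_cases hi : i = Fin.last m <;> simp [V, restrict, hi]
    · simp
  obtain ⟨w, hw⟩ := exists_forall_eval_ne_zero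
    ({αβ | P αβ.1 αβ.2} : Finset (Finset (Fin (m + 2)) × Finset (Fin (m + 2))))
    (fun αβ => qMinor G αβ.1 αβ.2) (by
      rintro ⟨α, β⟩ hαβ h0
      obtain ⟨v, b, hv, hne⟩ := hP α β (mem_filter.1 hαβ).2
      have hrestrict : restrict (fun o => o.elim b v) = v := by
        ext i; by_cases hi : i = Fin.last m <;> simp [restrict, hi, hv]
      have := heval (fun o => o.elim b v) α β
      rw [h0, map_zero, hrestrict] at this
      exact hne this.symm)
  exact ⟨restrict w, w none, if_pos rfl, fun α β hαβ => by
    simpa [heval] using hw (α, β) (mem_filter.2 ⟨mem_univ _, hαβ⟩)⟩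

/-- over a field of characteristic 0, if `B` is an `n × n` symmetric matrix
with `qpr(B) = q_1 ⋯ q_{n-1} A` and `q_k ∈ {A, S}` for `k = 1, …, n-1`, then there is an
`(n+1) × (n+1)` symmetric matrix `B'` with `qpr(B') = q_1 ⋯ q_{n-1} S A`. -/
theorem stmt_11 {F : Type*} [Field F] [CharZero F] {n : ℕ} (hn : 0 < n)
    (B : Matrix (Fin n) (Fin n) F) (hB : B.IsSymm)
    (hAS : ∀ k : ℕ, 1 ≤ k → k ≤ n - 1 →
      qprEntry B k = QPR.A ∨ qprEntry B k = QPR.S)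
    (hlast : qprEntry B n = QPR.A) :
    ∃ B' : Matrix (Fin (n + 1)) (Fin (n + 1)) F, B'.IsSymm ∧
      (∀ k : ℕ, 1 ≤ k → k ≤ n - 1 → qprEntry B' k = qprEntry B k) ∧
      qprEntry B' n = QPR.S ∧ qprEntry B' (n + 1) = QPR.A := by
  obtain ⟨m, rfl⟩ : ∃ m, n = m + 1 := ⟨n - 1, by omega⟩
  have hdet : B.det ≠ 0 := (qprEntry_eq_A_iff_det_ne_zero B).1 hlast
  obtain ⟨v, b, hv, hne⟩ := exists_borderMulVec_forall_qMinor_ne_zero B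
    (fun α β => (∃ k ≤ m, QPAllNonzero B k ∧ IsQPPair k α β) ∨ (α = univ ∧ β = univ))
    (by
      rintro α β (⟨k, hk, hNZ, hαβ⟩ | ⟨rfl, rfl⟩)
      · exact exists_borderMulVec_qMinor_ne_zero hB hk hNZ hαβ
      · refine ⟨0, 1, rfl, ?_⟩
        simpa [qMinor_univ, borderMulVec, det_borderMat_zero_left] using hdet)
  refine ⟨borderMulVec B v b, borderMulVec_isSymm hB v b, fun k hk1 hk => ?_,
    qprEntry_borderMulVec_eq_S B hv b hdet, ?_⟩
  · rcases hAS k hk1 hk with hA | hS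
    · rw [hA, qprEntry_eq_A_iff]
      exact fun α β hαβ =>
        hne α β (Or.inl ⟨k, by omega, (qprEntry_eq_A_iff B k).1 hA, hαβ⟩)
    · rw [hS]
      exact qprEntry_borderMat_of_eq_S B _ _ _ hS
  · rw [qprEntry_eq_A_iff_det_ne_zero, ← qMinor_univ]
    exact hne univ univ (Or.inr ⟨rfl, rfl⟩)
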